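/- arXiv:2408.10825 — 5 statements merged into one kernel-verified Lean document; each statement's English description precedes it below -/
import Mathlib

section
/- For every integer L ≥ 1 and every t ∈ (0,1) such that 2^L t is not an integer, the scaled sawtooth function ζ_L is differentiable at t with |ζ_L'(t)| = 2. Consequently ∫₀¹ (ζ_L'(t))² dt = 4, so that the L²([0,1]) norm of the derivative of ζ_L equals √3 · 2^L times the L²([0,1]) norm of ζ_L itself; in particular, ‖ζ_L'‖_{L²([0,1])} ≥ 2^L ‖ζ_L‖_{L²([0,1])}, even though ‖ζ_L‖_{L²([0,1])} → 0 as L → ∞. -/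
open MeasureTheory Filter

/-- The triangular function: `ζ(t) = 2t` for `0 ≤ t < 1/2`, `ζ(t) = 2(1−t)` for
`1/2 ≤ t ≤ 1`, and `ζ(t) = 0` otherwise. -/
noncomputable def zeta (t : ℝ) : ℝ :=
  if 0 ≤ t ∧ t < 1 / 2 then 2 * t
  else if 1 / 2 ≤ t ∧ t ≤ 1 then 2 * (1 - t)
  else 0

/-- The scaled sawtooth function `ζ_L = (2/2^L) · ζ^[L]`. -/
noncomputable def zetaL (L : ℕ) (t : ℝ) : ℝ := ((2 : ℝ) / 2 ^ L) * zeta^[L] t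

/-!
On each half of `[0, 1]` the tent map `ζ` is affine with slope `±2` and maps that half onto
`[0, 1]`. By the chain rule, `ζ^[L]` has slope `±2^L` away from the dyadic points `k / 2^L`, so
`ζ_L' = ±2` almost everywhere on `[0, 1]` and `∫₀¹ ζ_L'² = 4`. On the other hand `ζ` preserves
Lebesgue measure on `[0, 1]` (each half is stretched by the factor `2`), so
`∫₀¹ (ζ^[L])² = ∫₀¹ t² = 1/3` and `‖ζ_L‖ = 2 / (√3 · 2^L)`.
-/

open Set

lemma zeta_eq_max_min (t : ℝ) : zeta t = max 0 (min (2 * t) (2 * (1 - t))) := by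
  unfold zeta
  split_ifs <;> grind

lemma continuous_zeta : Continuous zeta := by
  simp only [funext zeta_eq_max_min]
  fun_prop

lemma zeta_of_le_half {t : ℝ} (h₀ : 0 ≤ t) (h₁ : t ≤ 1 / 2) : zeta t = 2 * t := by
  rw [zeta_eq_max_min, min_eq_left (by linarith), max_eq_right (by linarith)]

lemma zeta_of_half_le {t : ℝ} (h₀ : 1 / 2 ≤ t) (h₁ : t ≤ 1) : zeta t = 2 - 2 * t := by
  rw [zeta_eq_max_min, min_eq_right (by linarith), max_eq_right (by linarith)]
  ring

lemma intervalIntegral_comp_zeta {f : ℝ → ℝ} (hf : Continuous f) :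
    ∫ t in (0 : ℝ)..1, f (zeta t) = ∫ t in (0 : ℝ)..1, f t := by
  have hint : ∀ a b : ℝ, IntervalIntegrable (fun t => f (zeta t)) volume a b :=
    fun a b => (hf.comp continuous_zeta).intervalIntegrable a b
  have hleft : ∫ t in (0 : ℝ)..1 / 2, f (zeta t) = ∫ t in (0 : ℝ)..1 / 2, f (2 * t) :=
    intervalIntegral.integral_congr fun t ht => by
      rw [uIcc_of_le (by norm_num)] at ht
      simp only [zeta_of_le_half ht.1 ht.2]
  have hright : ∫ t in (1 / 2 : ℝ)..1, f (zeta t) = ∫ t in (1 / 2 : ℝ)..1, f (2 - 2 * t) :=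
    intervalIntegral.integral_congr fun t ht => by
      rw [uIcc_of_le (by norm_num)] at ht
      simp only [zeta_of_half_le ht.1 ht.2]
  rw [← intervalIntegral.integral_add_adjacent_intervals (hint 0 (1 / 2)) (hint (1 / 2) 1),
    hleft, hright, intervalIntegral.integral_comp_mul_left f two_ne_zero,
    intervalIntegral.integral_comp_sub_mul f two_ne_zero]
  norm_num
  ring

lemma intervalIntegral_comp_iterate_zeta {f : ℝ → ℝ} (hf : Continuous f) (n : ℕ) :
    ∫ t in (0 : ℝ)..1, f (zeta^[n] t) = ∫ t in (0 : ℝ)..1, f t := by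
  induction n with
  | zero => rfl
  | succ n ih =>
    simp only [Function.iterate_succ_apply]
    rw [intervalIntegral_comp_zeta (f := fun t => f (zeta^[n] t))
      (hf.comp (continuous_zeta.iterate n)), ih]

lemma sqrt_integral_zetaL_sq (L : ℕ) :
    Real.sqrt (∫ t in (0 : ℝ)..1, zetaL L t ^ 2) = 2 / (Real.sqrt 3 * 2 ^ L) := by
  have hint : ∫ t in (0 : ℝ)..1, zetaL L t ^ 2 = (2 / (Real.sqrt 3 * 2 ^ L)) ^ 2 := by
    simp only [zetaL, mul_pow]
    rw [intervalIntegral.integral_const_mul,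
      intervalIntegral_comp_iterate_zeta (f := fun t => t ^ 2) (continuous_pow 2), integral_pow,
      div_pow 2 (Real.sqrt 3 * 2 ^ L), mul_pow, Real.sq_sqrt zero_le_three]
    norm_num
    ring
  rw [hint, Real.sqrt_sq (by positivity)]

lemma hasDerivAt_zeta_of_lt_half {t : ℝ} (h₀ : 0 < t) (h₁ : t < 1 / 2) :
    HasDerivAt zeta 2 t := by
  have hlin : HasDerivAt (fun s : ℝ => 2 * s) 2 t := by
    simpa using (hasDerivAt_id t).const_mul (2 : ℝ)
  refine hlin.congr_of_eventuallyEq ?_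
  filter_upwards [Ioo_mem_nhds h₀ h₁] with s hs
  exact zeta_of_le_half hs.1.le hs.2.le

lemma hasDerivAt_zeta_of_half_lt {t : ℝ} (h₀ : 1 / 2 < t) (h₁ : t < 1) :
    HasDerivAt zeta (-2) t := by
  have hlin : HasDerivAt (fun s : ℝ => 2 - 2 * s) (-2) t := by
    simpa using ((hasDerivAt_id t).const_mul (2 : ℝ)).const_sub (2 : ℝ)
  refine hlin.congr_of_eventuallyEq ?_
  filter_upwards [Ioo_mem_nhds h₀ h₁] with s hs
  exact zeta_of_half_le hs.1.le hs.2.le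

/-- One application of `ζ` trades a factor `2` of the slope for one binary digit of `t`. -/
lemma exists_hasDerivAt_zeta_of_not_dyadic {n : ℕ} {t : ℝ} (ht : t ∈ Ioo (0 : ℝ) 1)
    (hk : ∀ k : ℤ, (2 : ℝ) ^ (n + 1) * t ≠ k) :
    ∃ d, HasDerivAt zeta d t ∧ |d| = 2 ∧ zeta t ∈ Ioo (0 : ℝ) 1 ∧
      ∀ k : ℤ, (2 : ℝ) ^ n * zeta t ≠ k := by
  have hhalf : t ≠ 1 / 2 := by
    rintro rfl
    exact hk (2 ^ n) (by push_cast; ring)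
  rcases hhalf.lt_or_gt with hlt | hgt
  · refine ⟨2, hasDerivAt_zeta_of_lt_half ht.1 hlt, by norm_num, ?_, fun k hk' => hk k ?_⟩
    · rw [zeta_of_le_half ht.1.le hlt.le]
      constructor <;> linarith [ht.1]
    · rw [← hk', zeta_of_le_half ht.1.le hlt.le]
      ring
  · refine ⟨-2, hasDerivAt_zeta_of_half_lt hgt ht.2, by norm_num, ?_, fun k hk' => ?_⟩
    · rw [zeta_of_half_le hgt.le ht.2.le]
      constructor <;> linarith [ht.2]
    · refine hk (2 ^ (n + 1) - k) ?_
      rw [zeta_of_half_le hgt.le ht.2.le] at hk'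
      push_cast
      linear_combination -hk'

lemma exists_hasDerivAt_iterate_zeta_of_not_dyadic (n : ℕ) {t : ℝ} (ht : t ∈ Ioo (0 : ℝ) 1)
    (hk : ∀ k : ℤ, (2 : ℝ) ^ n * t ≠ k) :
    ∃ d, HasDerivAt (zeta^[n]) d t ∧ |d| = 2 ^ n := by
  induction n generalizing t with
  | zero => exact ⟨1, by simpa using hasDerivAt_id t, by norm_num⟩
  | succ n ih =>
    obtain ⟨d₁, hd₁, habs₁, hζt, hkζ⟩ := exists_hasDerivAt_zeta_of_not_dyadic ht hk
    obtain ⟨d, hd, habs⟩ := ih hζt hkζ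
    refine ⟨d * d₁, ?_, ?_⟩
    · rw [Function.iterate_succ]
      exact hd.comp t hd₁
    · rw [abs_mul, habs, habs₁, pow_succ]

lemma exists_hasDerivAt_zetaL_of_not_dyadic (L : ℕ) {t : ℝ} (ht : t ∈ Ioo (0 : ℝ) 1)
    (hk : ∀ k : ℤ, (2 : ℝ) ^ L * t ≠ k) :
    ∃ d, HasDerivAt (zetaL L) d t ∧ |d| = 2 := by
  obtain ⟨d, hd, habs⟩ := exists_hasDerivAt_iterate_zeta_of_not_dyadic L ht hk
  refine ⟨2 / 2 ^ L * d, hd.const_mul _, ?_⟩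
  rw [abs_mul, habs, abs_of_pos (by positivity)]
  field_simp

lemma integral_deriv_zetaL_sq (L : ℕ) : ∫ t in (0 : ℝ)..1, deriv (zetaL L) t ^ 2 = 4 := by
  have hae : ∀ᵐ t ∂volume, t ∈ uIoc (0 : ℝ) 1 → deriv (zetaL L) t ^ 2 = 4 := by
    filter_upwards [(countable_range fun k : ℤ => (k : ℝ) / 2 ^ L).ae_notMem volume]
      with t hdyadic ht
    rw [uIoc_of_le zero_le_one] at ht
    have hk : ∀ k : ℤ, (2 : ℝ) ^ L * t ≠ k := fun k hkt =>
      hdyadic ⟨k, by simp only [← hkt]; field_simp⟩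
    have ht1 : t ≠ 1 := by
      rintro rfl
      exact hk (2 ^ L) (by push_cast; ring)
    obtain ⟨d, hd, habs⟩ :=
      exists_hasDerivAt_zetaL_of_not_dyadic L ⟨ht.1, ht.2.lt_of_ne ht1⟩ hk
    rw [hd.deriv, ← sq_abs, habs]
    norm_num
  rw [intervalIntegral.integral_congr_ae hae]
  simp

theorem zetaL_deriv_L2_blowup_general (L : ℕ) :
    (∀ t ∈ Set.Ioo (0 : ℝ) 1, (∀ k : ℤ, (2 : ℝ) ^ L * t ≠ (k : ℝ)) →
      DifferentiableAt ℝ (zetaL L) t ∧ |deriv (zetaL L) t| = 2) ∧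
    (∫ t in (0 : ℝ)..1, deriv (zetaL L) t ^ 2) = 4 ∧
    Real.sqrt (∫ t in (0 : ℝ)..1, deriv (zetaL L) t ^ 2)
      = Real.sqrt 3 * 2 ^ L * Real.sqrt (∫ t in (0 : ℝ)..1, zetaL L t ^ 2) ∧
    Real.sqrt (∫ t in (0 : ℝ)..1, deriv (zetaL L) t ^ 2)
      ≥ 2 ^ L * Real.sqrt (∫ t in (0 : ℝ)..1, zetaL L t ^ 2) ∧
    Tendsto (fun M : ℕ => Real.sqrt (∫ t in (0 : ℝ)..1, zetaL M t ^ 2))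
      atTop (nhds 0) := by
  have hratio : Real.sqrt (∫ t in (0 : ℝ)..1, deriv (zetaL L) t ^ 2)
      = Real.sqrt 3 * 2 ^ L * Real.sqrt (∫ t in (0 : ℝ)..1, zetaL L t ^ 2) := by
    rw [integral_deriv_zetaL_sq, sqrt_integral_zetaL_sq, show (4 : ℝ) = 2 ^ 2 by norm_num,
      Real.sqrt_sq zero_le_two]
    field_simp
  refine ⟨fun t ht hk => ?_, integral_deriv_zetaL_sq L, hratio, ?_, ?_⟩
  · obtain ⟨d, hd, habs⟩ := exists_hasDerivAt_zetaL_of_not_dyadic L ht hk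
    exact ⟨hd.differentiableAt, hd.deriv ▸ habs⟩
  · rw [hratio]
    have hsqrt3 : 1 ≤ Real.sqrt 3 := Real.one_le_sqrt.mpr (by norm_num)
    gcongr
    exact le_mul_of_one_le_left (by positivity) hsqrt3
  · simp only [sqrt_integral_zetaL_sq]
    exact tendsto_const_nhds.div_atTop <|
      (tendsto_pow_atTop_atTop_of_one_lt one_lt_two).const_mul_atTop (by positivity)

/-- For `L ≥ 1`: at every `t ∈ (0,1)` with `2^L t` not an integer, `ζ_L` is differentiable
with `|ζ_L'(t)| = 2`; consequently `∫₀¹ ζ_L'(t)² dt = 4`, so the `L²([0,1])` norm of the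
derivative equals `√3·2^L` times the `L²([0,1])` norm of `ζ_L` itself, in particular
`‖ζ_L'‖ ≥ 2^L ‖ζ_L‖`, even though `‖ζ_L‖ → 0` as `L → ∞`. -/
theorem zetaL_deriv_L2_blowup (L : ℕ) (hL : 1 ≤ L) :
    (∀ t ∈ Set.Ioo (0 : ℝ) 1, (∀ k : ℤ, (2 : ℝ) ^ L * t ≠ (k : ℝ)) →
      DifferentiableAt ℝ (zetaL L) t ∧ |deriv (zetaL L) t| = 2) ∧
    (∫ t in (0 : ℝ)..1, deriv (zetaL L) t ^ 2) = 4 ∧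
    Real.sqrt (∫ t in (0 : ℝ)..1, deriv (zetaL L) t ^ 2)
      = Real.sqrt 3 * 2 ^ L * Real.sqrt (∫ t in (0 : ℝ)..1, zetaL L t ^ 2) ∧
    Real.sqrt (∫ t in (0 : ℝ)..1, deriv (zetaL L) t ^ 2)
      ≥ 2 ^ L * Real.sqrt (∫ t in (0 : ℝ)..1, zetaL L t ^ 2) ∧
    Tendsto (fun M : ℕ => Real.sqrt (∫ t in (0 : ℝ)..1, zetaL M t ^ 2))
      atTop (nhds 0) :=
  zetaL_deriv_L2_blowup_general L
end

section
/- Let K : ℝ → ℝ be a continuously differentiable kernel supported on [−1, 1] with derivative K̇, let m ≥ 0 be an integer, h > 0, and let ĝ and m₀ be square-integrable functions on ℝ^m × ℝ with respect to Lebesgue measure λ. Suppose ‖ĝ − m₀‖_{L²(λ)} ≤ r, suppose m₀ is differentiable in its last coordinate with partial derivative m₀ⱼ, and suppose the smoothed derivative m₀ⱼˢ satisfies ‖m₀ⱼˢ − m₀ⱼ‖_{L²(λ)} ≤ B. Then the smoothed derivative estimator ĝⱼˢ satisfies ‖ĝⱼˢ − m₀ⱼ‖_{L²(λ)} ≤ (√2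 ‖K̇‖_{L²([−1,1])}/h) · r + B. -/
/-!
Write `S g (x) = ∫ g (T x b) k(b) dν(b)` with `T (f, x) a = (f, x - a h)`, `k = K̇` and `ν` Lebesgue
measure on `[-1, 1]`, so that the smoothed derivative of `g` is `S g / h`. Almost everywhere,
`ĝⱼˢ - m₀ⱼ = S (ĝ - m₀) / h + (m₀ⱼˢ - m₀ⱼ)`, and the second term is the bias. The first is
controlled by the `L²` boundedness of `S`: Cauchy–Schwarz in `b` gives
`|S g (x)|² ≤ ‖k‖²_{L²(ν)} ∫ |g (T x b)|² dν(b)`, and integrating in `x` by Tonelli, every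
`T · b` being measure preserving, gives `‖S g‖² ≤ ν(univ) ‖k‖²_{L²(ν)} ‖g‖²` with `ν(univ) = 2`.
-/

open Filter Function MeasureTheory
open scoped ENNReal

namespace MeasureTheory

theorem enorm_integral_mul_le_eLpNorm_mul_eLpNorm {β : Type*} [MeasurableSpace β]
    {ν : Measure β} {u k : β → ℝ} (hu : AEStronglyMeasurable u ν) (hk : AEStronglyMeasurable k ν) :
    ‖∫ b, u b * k b ∂ν‖ₑ ≤ eLpNorm u 2 ν * eLpNorm k 2 ν := by
  have h := eLpNorm_smul_le_mul_eLpNorm (p := 2) (q := 2) (r := 1) hk hu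
  rw [eLpNorm_one_eq_lintegral_enorm] at h
  exact (enorm_integral_le_lintegral_enorm _).trans h

theorem eLpNorm_two_rpow_two_eq_lintegral {α E : Type*} [MeasurableSpace α] [NormedAddCommGroup E]
    {μ : Measure α} (f : α → E) :
    eLpNorm f 2 μ ^ (2 : ℝ) = ∫⁻ x, ‖f x‖ₑ ^ (2 : ℝ) ∂μ := by
  simpa using eLpNorm_nnreal_pow_eq_lintegral (f := f) (μ := μ) (p := 2) two_ne_zero

theorem sqrt_integral_sq_eq_lpNorm {α : Type*} [MeasurableSpace α] {μ : Measure α} {f : α → ℝ}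
    (hf : AEStronglyMeasurable f μ) : √(∫ x, f x ^ 2 ∂μ) = lpNorm f 2 μ := by
  have h := lpNorm_nnreal_eq_integral_norm_rpow (p := 2) two_ne_zero hf
  simp only [ENNReal.coe_ofNat, NNReal.coe_ofNat, Real.norm_eq_abs, Real.rpow_two, sq_abs] at h
  rw [h, Real.sqrt_eq_rpow, one_div]

theorem lpNorm_congr_ae {α E : Type*} [MeasurableSpace α] [NormedAddCommGroup E]
    {μ : Measure α} {p : ℝ≥0∞} {f g : α → E} (hfg : f =ᵐ[μ] g) :
    lpNorm f p μ = lpNorm g p μ := by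
  by_cases hf : AEStronglyMeasurable f μ
  · rw [← toReal_eLpNorm hf, ← toReal_eLpNorm (hf.congr hfg), eLpNorm_congr_ae hfg]
  · rw [lpNorm_of_not_aestronglyMeasurable hf,
      lpNorm_of_not_aestronglyMeasurable fun hg => hf (hg.congr hfg.symm)]

theorem _root_.ContinuousOn.memLp_restrict {X E : Type*} [TopologicalSpace X] [T2Space X]
    [MeasurableSpace X] [OpensMeasurableSpace X] [NormedAddCommGroup E]
    [SecondCountableTopologyEither X E] {μ : Measure X} [IsFiniteMeasureOnCompacts μ]
    {s : Set X} {f : X → E} (hs : IsCompact s) (hf : ContinuousOn f s) (p : ℝ≥0∞) :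
    MemLp f p (μ.restrict s) := by
  have : IsFiniteMeasure (μ.restrict s) := isFiniteMeasure_restrict.2 hs.measure_lt_top.ne
  obtain ⟨C, hC⟩ := hs.exists_bound_of_continuousOn hf
  exact MemLp.of_bound (hf.aestronglyMeasurable hs.measurableSet) C
    (ae_restrict_of_forall_mem hs.measurableSet hC)

theorem AEStronglyMeasurable.of_hasDerivAt_snd {γ E : Type*} [MeasurableSpace γ]
    [NormedAddCommGroup E] [NormedSpace ℝ E] {μ : Measure γ} [SFinite μ] {f f' : γ × ℝ → E}
    (hf : AEStronglyMeasurable f (μ.prod volume))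
    (hf' : ∀ x y, HasDerivAt (fun y => f (x, y)) (f' (x, y)) y) :
    AEStronglyMeasurable f' (μ.prod volume) := by
  have hshift : ∀ t : ℝ, AEStronglyMeasurable (fun p : γ × ℝ => f (p.1, p.2 + t)) (μ.prod volume) :=
    fun t => hf.comp_quasiMeasurePreserving
      ((MeasurePreserving.id μ).prod (measurePreserving_add_right volume t)).quasiMeasurePreserving
  have ht : Tendsto (fun n : ℕ => 1 / ((n : ℝ) + 1)) atTop (nhdsWithin 0 (Set.Ioi 0)) :=
    tendsto_nhdsWithin_of_tendsto_nhds_of_eventually_within _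
      tendsto_one_div_add_atTop_nhds_zero_nat (Eventually.of_forall fun n => by simp; positivity)
  exact aestronglyMeasurable_of_tendsto_ae (ι := ℕ) atTop
    (fun n => ((hshift _).sub hf).const_smul (1 / ((n : ℝ) + 1))⁻¹)
    (ae_of_all _ fun p => (hf' p.1 p.2).tendsto_slope_zero_right.comp ht)

noncomputable def smoothing {α β : Type*} [MeasurableSpace β] (T : α → β → α) (ν : Measure β)
    (k : β → ℝ) (g : α → ℝ) (x : α) : ℝ :=
  ∫ b, g (T x b) * k b ∂ν

section Smoothing

variable {α β : Type*} [MeasurableSpace α] [MeasurableSpace β] {μ : Measure α} {ν : Measure β}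
  [SFinite μ] [SFinite ν] {T : α → β → α} {k : β → ℝ} {g : α → ℝ}

theorem AEStronglyMeasurable.comp_uncurry (hT : Measurable (uncurry T))
    (hTμ : ∀ b, MeasurePreserving (T · b) μ μ) (hg : AEStronglyMeasurable g μ) :
    AEStronglyMeasurable (fun q : α × β => g (T q.1 q.2)) (μ.prod ν) :=
  hg.comp_quasiMeasurePreserving <|
    QuasiMeasurePreserving.prod_of_left hT (ae_of_all _ fun b => (hTμ b).quasiMeasurePreserving)

theorem lintegral_lintegral_enorm_comp_rpow_two (hT : Measurable (uncurry T))
    (hTμ : ∀ b, MeasurePreserving (T · b) μ μ) (hg : AEStronglyMeasurable g μ) :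
    ∫⁻ x, ∫⁻ b, ‖g (T x b)‖ₑ ^ (2 : ℝ) ∂ν ∂μ = ν Set.univ * eLpNorm g 2 μ ^ (2 : ℝ) := by
  have hslice : ∀ b, ∫⁻ x, ‖g (T x b)‖ₑ ^ (2 : ℝ) ∂μ = eLpNorm g 2 μ ^ (2 : ℝ) := fun b => by
    rw [eLpNorm_two_rpow_two_eq_lintegral]
    conv_rhs => rw [← (hTμ b).map_eq]
    have hmeas : AEMeasurable (fun y => ‖g y‖ₑ ^ (2 : ℝ)) μ := hg.enorm.pow_const _
    exact (lintegral_map' (by rwa [(hTμ b).map_eq]) (hTμ b).measurable.aemeasurable).symm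
  rw [lintegral_lintegral_swap (f := fun x b => ‖g (T x b)‖ₑ ^ (2 : ℝ))
    ((hg.comp_uncurry hT hTμ).enorm.pow_const _)]
  simp only [hslice, lintegral_const]
  ring

theorem aestronglyMeasurable_smoothing (hT : Measurable (uncurry T))
    (hTμ : ∀ b, MeasurePreserving (T · b) μ μ) (hg : AEStronglyMeasurable g μ)
    (hk : AEStronglyMeasurable k ν) :
    AEStronglyMeasurable (smoothing T ν k g) μ :=
  ((hg.comp_uncurry hT hTμ).mul hk.comp_snd).integral_prod_right'

theorem eLpNorm_smoothing_le (hT : Measurable (uncurry T))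
    (hTμ : ∀ b, MeasurePreserving (T · b) μ μ) (hg : AEStronglyMeasurable g μ)
    (hk : AEStronglyMeasurable k ν) :
    eLpNorm (smoothing T ν k g) 2 μ ≤ ν Set.univ ^ (2⁻¹ : ℝ) * eLpNorm k 2 ν * eLpNorm g 2 μ := by
  have hpointwise : ∀ᵐ x ∂μ, ‖smoothing T ν k g x‖ₑ ^ (2 : ℝ) ≤
      (∫⁻ b, ‖g (T x b)‖ₑ ^ (2 : ℝ) ∂ν) * eLpNorm k 2 ν ^ (2 : ℝ) := by
    filter_upwards [(hg.comp_uncurry (ν := ν) hT hTμ).prodMk_left] with x hx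
    rw [← eLpNorm_two_rpow_two_eq_lintegral, ← ENNReal.mul_rpow_of_nonneg _ _ zero_le_two]
    exact ENNReal.rpow_le_rpow (enorm_integral_mul_le_eLpNorm_mul_eLpNorm hx hk) zero_le_two
  rw [← ENNReal.rpow_le_rpow_iff (z := 2) zero_lt_two, eLpNorm_two_rpow_two_eq_lintegral]
  calc ∫⁻ x, ‖smoothing T ν k g x‖ₑ ^ (2 : ℝ) ∂μ
      ≤ ∫⁻ x, (∫⁻ b, ‖g (T x b)‖ₑ ^ (2 : ℝ) ∂ν) * eLpNorm k 2 ν ^ (2 : ℝ) ∂μ :=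
        lintegral_mono_ae hpointwise
    _ = ν Set.univ * eLpNorm g 2 μ ^ (2 : ℝ) * eLpNorm k 2 ν ^ (2 : ℝ) := by
        rw [lintegral_mul_const''
            _ ((hg.comp_uncurry hT hTμ).enorm.pow_const _).lintegral_prod_right',
          lintegral_lintegral_enorm_comp_rpow_two hT hTμ hg]
    _ = (ν Set.univ ^ (2⁻¹ : ℝ) * eLpNorm k 2 ν * eLpNorm g 2 μ) ^ (2 : ℝ) := by
        simp only [ENNReal.mul_rpow_of_nonneg _ _ zero_le_two, ← ENNReal.rpow_mul]
        norm_num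
        ring

variable [IsFiniteMeasure ν]

theorem MemLp.smoothing (hT : Measurable (uncurry T))
    (hTμ : ∀ b, MeasurePreserving (T · b) μ μ) (hg : MemLp g 2 μ) (hk : MemLp k 2 ν) :
    MemLp (smoothing T ν k g) 2 μ :=
  ⟨aestronglyMeasurable_smoothing hT hTμ hg.1 hk.1,
    (eLpNorm_smoothing_le hT hTμ hg.1 hk.1).trans_lt <| ENNReal.mul_lt_top
      (ENNReal.mul_lt_top (ENNReal.rpow_lt_top_of_nonneg (by norm_num) (measure_ne_top _ _))
        hk.eLpNorm_lt_top) hg.eLpNorm_lt_top⟩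

theorem lpNorm_smoothing_le (hT : Measurable (uncurry T))
    (hTμ : ∀ b, MeasurePreserving (T · b) μ μ) (hg : MemLp g 2 μ) (hk : MemLp k 2 ν) :
    lpNorm (smoothing T ν k g) 2 μ ≤ √(ν.real Set.univ) * lpNorm k 2 ν * lpNorm g 2 μ := by
  rw [← toReal_eLpNorm (aestronglyMeasurable_smoothing hT hTμ hg.1 hk.1), ← toReal_eLpNorm hk.1,
    ← toReal_eLpNorm hg.1, Real.sqrt_eq_rpow, one_div, measureReal_def, ENNReal.toReal_rpow,
    ← ENNReal.toReal_mul, ← ENNReal.toReal_mul]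
  refine ENNReal.toReal_mono ?_ (eLpNorm_smoothing_le hT hTμ hg.1 hk.1)
  exact ENNReal.mul_ne_top (ENNReal.mul_ne_top (ENNReal.rpow_ne_top_of_nonneg (by norm_num)
    (measure_ne_top _ _)) hk.eLpNorm_ne_top) hg.eLpNorm_ne_top

theorem ae_integrable_mul_comp (hT : Measurable (uncurry T))
    (hTμ : ∀ b, MeasurePreserving (T · b) μ μ) (hg : MemLp g 2 μ) (hk : MemLp k 2 ν) :
    ∀ᵐ x ∂μ, Integrable (fun b => g (T x b) * k b) ν := by
  have hfin : ∀ᵐ x ∂μ, ∫⁻ b, ‖g (T x b)‖ₑ ^ (2 : ℝ) ∂ν < ∞ := by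
    refine ae_lt_top' ((hg.1.comp_uncurry hT hTμ).enorm.pow_const _).lintegral_prod_right' ?_
    rw [lintegral_lintegral_enorm_comp_rpow_two hT hTμ hg.1]
    exact ENNReal.mul_ne_top (measure_ne_top _ _)
      (ENNReal.rpow_ne_top_of_nonneg zero_le_two hg.eLpNorm_ne_top)
  filter_upwards [hfin, (hg.1.comp_uncurry (ν := ν) hT hTμ).prodMk_left] with x hx hmeas
  have hslice : MemLp (fun b => g (T x b)) 2 ν := by
    refine ⟨hmeas, ?_⟩
    rwa [← ENNReal.rpow_lt_top_iff_of_pos zero_lt_two, eLpNorm_two_rpow_two_eq_lintegral]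
  exact memLp_one_iff_integrable.mp (hk.mul' hslice)

theorem smoothing_sub (hT : Measurable (uncurry T))
    (hTμ : ∀ b, MeasurePreserving (T · b) μ μ) {g₁ g₂ : α → ℝ} (hg₁ : MemLp g₁ 2 μ)
    (hg₂ : MemLp g₂ 2 μ) (hk : MemLp k 2 ν) :
    smoothing T ν k (g₁ - g₂) =ᵐ[μ] smoothing T ν k g₁ - smoothing T ν k g₂ := by
  filter_upwards [ae_integrable_mul_comp hT hTμ hg₁ hk, ae_integrable_mul_comp hT hTμ hg₂ hk]
    with x h₁ h₂
  simp only [smoothing, Pi.sub_apply, sub_mul]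
  exact integral_sub h₁ h₂

theorem lpNorm_const_mul_smoothing_sub_le (hT : Measurable (uncurry T))
    (hTμ : ∀ b, MeasurePreserving (T · b) μ μ) {g g₀ d : α → ℝ} (hg : MemLp g 2 μ)
    (hg₀ : MemLp g₀ 2 μ) (hk : MemLp k 2 ν) {c : ℝ} (hc : 0 ≤ c) :
    lpNorm (fun x => c * smoothing T ν k g x - d x) 2 μ ≤
      c * √(ν.real Set.univ) * lpNorm k 2 ν * lpNorm (g - g₀) 2 μ +
        lpNorm (fun x => c * smoothing T ν k g₀ x - d x) 2 μ := by
  have hsplit : (fun x => c * smoothing T ν k g x - d x) =ᵐ[μ]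
      c • smoothing T ν k (g - g₀) + fun x => c * smoothing T ν k g₀ x - d x := by
    filter_upwards [smoothing_sub hT hTμ hg hg₀ hk] with x hx
    simp only [Pi.add_apply, Pi.smul_apply, hx, Pi.sub_apply, smul_eq_mul]
    ring
  rw [lpNorm_congr_ae hsplit]
  refine (lpNorm_add_le (((hg.sub hg₀).smoothing hT hTμ hk).const_smul c) one_le_two).trans ?_
  rw [lpNorm_const_smul, coe_nnnorm, Real.norm_of_nonneg hc, mul_assoc, mul_assoc]
  gcongr
  rw [← mul_assoc]
  exact lpNorm_smoothing_le hT hTμ (hg.sub hg₀) hk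

end Smoothing

end MeasureTheory

theorem smoothed_deriv_estimation_rate_general (m : ℕ) (K : ℝ → ℝ) (hK : ContDiff ℝ 1 K)
    (h : ℝ) (hh : 0 < h) (r B : ℝ)
    (ghat m₀ m₀j : (Fin m → ℝ) × ℝ → ℝ)
    (hghat : MemLp ghat 2 volume) (hm₀ : MemLp m₀ 2 volume)
    (hderiv : ∀ (f : Fin m → ℝ) (x : ℝ), HasDerivAt (fun y => m₀ (f, y)) (m₀j (f, x)) x)
    (hrate : Real.sqrt (∫ p : (Fin m → ℝ) × ℝ, (ghat p - m₀ p) ^ 2) ≤ r)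
    (hbias : Real.sqrt (∫ p : (Fin m → ℝ) × ℝ,
        ((1 / h) * (∫ a in (-1 : ℝ)..1, m₀ (p.1, p.2 - a * h) * deriv K a) - m₀j p) ^ 2)
      ≤ B) :
    Real.sqrt (∫ p : (Fin m → ℝ) × ℝ,
        ((1 / h) * (∫ a in (-1 : ℝ)..1, ghat (p.1, p.2 - a * h) * deriv K a) - m₀j p) ^ 2)
      ≤ (Real.sqrt 2 * Real.sqrt (∫ a in (-1 : ℝ)..1, deriv K a ^ 2) / h) * r + B := by
  set ν : Measure ℝ := volume.restrict (Set.Ioc (-1) 1)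
  set T := fun (p : (Fin m → ℝ) × ℝ) (a : ℝ) => (p.1, p.2 - a * h)
  have hT : Measurable (uncurry T) := by fun_prop
  have hTμ : ∀ a, MeasurePreserving (T · a) volume volume := fun a =>
    (MeasurePreserving.id volume).prod (measurePreserving_sub_right volume (a * h))
  have hk : MemLp (deriv K) 2 ν :=
    ((hK.continuous_deriv le_rfl).continuousOn.memLp_restrict isCompact_Icc 2).mono_measure
      (Measure.restrict_mono Set.Ioc_subset_Icc_self le_rfl)
  set S := smoothing T ν (deriv K)
  have hS : ∀ g p, ∫ a in (-1 : ℝ)..1, g (p.1, p.2 - a * h) * deriv K a = S g p :=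
    fun _ _ => intervalIntegral.integral_of_le (by norm_num)
  -- `√(∫ f ^ 2)` is the `L²` norm only for a.e.-measurable `f`, hence the measurability of `m₀j`.
  have hSm : ∀ g, MemLp g 2 volume →
      AEStronglyMeasurable (fun p => 1 / h * S g p - m₀j p) volume := fun g hg =>
    ((aestronglyMeasurable_smoothing hT hTμ hg.1 hk.1).const_mul _).sub
      (hm₀.1.of_hasDerivAt_snd hderiv)
  simp only [hS] at hbias ⊢
  rw [sqrt_integral_sq_eq_lpNorm (f := fun p => 1 / h * S m₀ p - m₀j p) (hSm m₀ hm₀)] at hbias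
  rw [sqrt_integral_sq_eq_lpNorm (f := fun p => ghat p - m₀ p) (hghat.1.sub hm₀.1)] at hrate
  rw [sqrt_integral_sq_eq_lpNorm (f := fun p => 1 / h * S ghat p - m₀j p) (hSm ghat hghat),
    intervalIntegral.integral_of_le (by norm_num), sqrt_integral_sq_eq_lpNorm hk.1]
  have hν : ν.real Set.univ = 2 := by simp [ν]; norm_num
  calc _ ≤ 1 / h * √(ν.real Set.univ) * lpNorm (deriv K) 2 ν * lpNorm (ghat - m₀) 2 volume +
        lpNorm (fun p => 1 / h * S m₀ p - m₀j p) 2 volume :=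
        lpNorm_const_mul_smoothing_sub_le hT hTμ hghat hm₀ hk (by positivity)
    _ = √2 * lpNorm (deriv K) 2 ν / h * lpNorm (ghat - m₀) 2 volume +
        lpNorm (fun p => 1 / h * S m₀ p - m₀j p) 2 volume := by rw [hν]; ring
    _ ≤ _ := by
        have : 0 ≤ lpNorm (deriv K) 2 ν := lpNorm_nonneg
        gcongr
        exact hrate

/-- Smoothing recovers the derivative-estimation rate: if `‖ĝ − m₀‖_{L²(λ)} ≤ r`, if `m₀`
is differentiable in its last coordinate with partial derivative `m₀ⱼ`, and if the smoothed
partial derivative `m₀ⱼˢ(f,x) = (1/h)∫_{−1}^1 m₀(f, x − a h) K̇(a) da` satisfies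
`‖m₀ⱼˢ − m₀ⱼ‖_{L²(λ)} ≤ B`, then the smoothed derivative estimator `ĝⱼˢ` satisfies
`‖ĝⱼˢ − m₀ⱼ‖_{L²(λ)} ≤ (√2 ‖K̇‖_{L²([−1,1])}/h) r + B`. -/
theorem smoothed_deriv_estimation_rate (m : ℕ) (K : ℝ → ℝ) (hK : ContDiff ℝ 1 K)
    (hsupp : Function.support K ⊆ Set.Icc (-1) 1) (h : ℝ) (hh : 0 < h) (r B : ℝ)
    (ghat m₀ m₀j : (Fin m → ℝ) × ℝ → ℝ)
    (hghat : MemLp ghat 2 volume) (hm₀ : MemLp m₀ 2 volume)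
    (hderiv : ∀ (f : Fin m → ℝ) (x : ℝ), HasDerivAt (fun y => m₀ (f, y)) (m₀j (f, x)) x)
    (hrate : Real.sqrt (∫ p : (Fin m → ℝ) × ℝ, (ghat p - m₀ p) ^ 2) ≤ r)
    (hbias : Real.sqrt (∫ p : (Fin m → ℝ) × ℝ,
        ((1 / h) * (∫ a in (-1 : ℝ)..1, m₀ (p.1, p.2 - a * h) * deriv K a) - m₀j p) ^ 2)
      ≤ B) :
    Real.sqrt (∫ p : (Fin m → ℝ) × ℝ,
        ((1 / h) * (∫ a in (-1 : ℝ)..1, ghat (p.1, p.2 - a * h) * deriv K a) - m₀j p) ^ 2)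
      ≤ (Real.sqrt 2 * Real.sqrt (∫ a in (-1 : ℝ)..1, deriv K a ^ 2) / h) * r + B :=
  smoothed_deriv_estimation_rate_general m K hK h hh r B ghat m₀ m₀j hghat hm₀ hderiv hrate hbias
end

section
/- Let d, r, r̄ ≥ 1 be integers, B ∈ ℝ^{d × r}, W ∈ ℝ^{d × r̄} with |W_{j,k}| ≤ c_W for all entries, H = d^{−1} Wᵀ B, and suppose H' ∈ ℝ^{r × r̄} satisfies H'H = I_r. Let m₀ : ℝ^r × ℝ → ℝ be measurable and satisfy |m₀(f, x) − m₀(f', x)| ≤ C_L ‖f − f'‖₂ for all f, f', x. Let (Ω, ℙ) be a probability space carrying measurable F : Ω → ℝ^r, X : Ω → ℝ, and u : Ω → ℝ^d with u_j u_{j'} integrable for all j, j'. Then, with F̃ = HF + d^{−1}Wᵀu, 𝔼[(m₀(F, X) − m₀(H'F̃, X))²] ≤ C_L² ‖H'‖_op² d^{−2} r̄ c_W² ( ∑_{j=1}^{d} 𝔼[u_j²] + ∑_{j ≠ j'} |𝔼[u_j u_{j'}]| ). -/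
/-!
Since `H' H = 1`, the argument `H' F̃` equals `F + d⁻¹ H' Wᵀ u`, so the Lipschitz bound and the
operator norm of `H'` dominate the integrand by `C_L² ‖H'‖²_op d⁻² ∑_k ((Wᵀ u)_k)²`. Expanding each
square, `𝔼 ((Wᵀ u)_k)² = ∑_{j,j'} W_{jk} W_{j'k} 𝔼[u_j u_{j'}] ≤ c_W² ∑_{j,j'} |𝔼[u_j u_{j'}]|`, and the
diagonal terms of the last sum are the second moments `𝔼 u_j²`.
-/

open MeasureTheory

/-- The ℓ₂ operator norm of a real matrix, via its action on Euclidean space. -/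
noncomputable def matOpNorm {a b : ℕ} (A : Matrix (Fin a) (Fin b) ℝ) : ℝ :=
  ‖LinearMap.toContinuousLinearMap (Matrix.toEuclideanLin A)‖

open Matrix

lemma sum_sq_mulVec_le_matOpNorm_sq {a b : ℕ} (A : Matrix (Fin a) (Fin b) ℝ) (w : Fin b → ℝ) :
    ∑ i, (A *ᵥ w) i ^ 2 ≤ matOpNorm A ^ 2 * ∑ k, w k ^ 2 := by
  have h := pow_le_pow_left₀ (norm_nonneg _)
    ((LinearMap.toContinuousLinearMap (toEuclideanLin A)).le_opNorm (WithLp.toLp 2 w)) 2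
  rwa [mul_pow, EuclideanSpace.real_norm_sq_eq, EuclideanSpace.real_norm_sq_eq] at h

lemma sq_le_sq_mul_of_abs_le_mul_sqrt {a c s : ℝ} (hs : 0 ≤ s) (h : |a| ≤ c * √s) :
    a ^ 2 ≤ c ^ 2 * s := by
  calc a ^ 2 = |a| ^ 2 := (sq_abs a).symm
    _ ≤ (c * √s) ^ 2 := pow_le_pow_left₀ (abs_nonneg a) h 2
    _ = c ^ 2 * s := by rw [mul_pow, Real.sq_sqrt hs]

lemma sq_sub_le_of_lipschitz_of_mul_eq_one {r s : ℕ} {m₀ : (Fin r → ℝ) → ℝ → ℝ} {CL : ℝ}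
    (hLip : ∀ (f f' : Fin r → ℝ) (x : ℝ),
      |m₀ f x - m₀ f' x| ≤ CL * Real.sqrt (∑ i, (f i - f' i) ^ 2))
    {H : Matrix (Fin s) (Fin r) ℝ} {H' : Matrix (Fin r) (Fin s) ℝ} (hH' : H' * H = 1)
    (f : Fin r → ℝ) (v : Fin s → ℝ) (x : ℝ) :
    (m₀ f x - m₀ (H' *ᵥ (H *ᵥ f + v)) x) ^ 2 ≤ CL ^ 2 * matOpNorm H' ^ 2 * ∑ k, v k ^ 2 := by
  have hf : H' *ᵥ (H *ᵥ f + v) = f + H' *ᵥ v := by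
    rw [mulVec_add, mulVec_mulVec, hH', one_mulVec]
  have hdist : ∑ i, (f i - (f + H' *ᵥ v) i) ^ 2 = ∑ i, (H' *ᵥ v) i ^ 2 := by
    simp only [Pi.add_apply, sub_add_cancel_left, neg_sq]
  have hlip := hLip f (f + H' *ᵥ v) x
  rw [hdist] at hlip
  rw [hf, mul_assoc]
  exact (sq_le_sq_mul_of_abs_le_mul_sqrt (by positivity) hlip).trans
    (mul_le_mul_of_nonneg_left (sum_sq_mulVec_le_matOpNorm_sq H' v) (sq_nonneg CL))

lemma sum_sq_smul {ι : Type*} [Fintype ι] (c : ℝ) (v : ι → ℝ) :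
    ∑ k, (c • v) k ^ 2 = c ^ 2 * ∑ k, v k ^ 2 := by
  simp only [Pi.smul_apply, smul_eq_mul, mul_pow, Finset.mul_sum]

lemma sum_sum_abs_eq_sum_abs_diag_add_offDiag {ι : Type*} [Fintype ι] [DecidableEq ι]
    (M : ι → ι → ℝ) :
    ∑ j, ∑ j', |M j j'| = ∑ j, |M j j| + ∑ j, ∑ j', if j = j' then 0 else |M j j'| := by
  rw [← Finset.sum_add_distrib]
  refine Finset.sum_congr rfl fun j _ => ?_
  rw [← Finset.add_sum_erase _ _ (Finset.mem_univ j)]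
  simp [Finset.sum_ite, Finset.filter_ne]

section SecondMoments

variable {Ω ι : Type*} [MeasurableSpace Ω] {μ : Measure Ω} [Fintype ι] {u : Ω → ι → ℝ}

lemma sq_dotProduct_eq_sum_sum (a x : ι → ℝ) :
    (a ⬝ᵥ x) ^ 2 = ∑ j, ∑ j', a j * a j' * (x j * x j') := by
  rw [sq, dotProduct, Finset.sum_mul_sum]
  exact Finset.sum_congr rfl fun j _ => Finset.sum_congr rfl fun j' _ => by ring

lemma integrable_sq_dotProduct (hu : ∀ j j', Integrable (fun ω => u ω j * u ω j') μ)
    (a : ι → ℝ) : Integrable (fun ω => (a ⬝ᵥ u ω) ^ 2) μ := by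
  simp only [sq_dotProduct_eq_sum_sum]
  exact integrable_finsetSum _ fun j _ => integrable_finsetSum _ fun j' _ =>
    (hu j j').const_mul _

lemma integral_sq_dotProduct (hu : ∀ j j', Integrable (fun ω => u ω j * u ω j') μ)
    (a : ι → ℝ) :
    ∫ ω, (a ⬝ᵥ u ω) ^ 2 ∂μ = ∑ j, ∑ j', a j * a j' * ∫ ω, u ω j * u ω j' ∂μ := by
  simp only [sq_dotProduct_eq_sum_sum]
  rw [integral_finsetSum _ fun j _ => integrable_finsetSum _ fun j' _ =>
    (hu j j').const_mul _]
  refine Finset.sum_congr rfl fun j _ => ?_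
  rw [integral_finsetSum _ fun j' _ => (hu j j').const_mul _]
  exact Finset.sum_congr rfl fun j' _ => integral_const_mul _ _

lemma integral_sq_dotProduct_le (hu : ∀ j j', Integrable (fun ω => u ω j * u ω j') μ)
    {a : ι → ℝ} {c : ℝ} (ha : ∀ j, |a j| ≤ c) :
    ∫ ω, (a ⬝ᵥ u ω) ^ 2 ∂μ ≤ c ^ 2 * ∑ j, ∑ j', |∫ ω, u ω j * u ω j' ∂μ| := by
  rw [integral_sq_dotProduct hu, Finset.mul_sum]
  refine Finset.sum_le_sum fun j _ => ?_
  rw [Finset.mul_sum]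
  refine Finset.sum_le_sum fun j' _ => ?_
  have hc : 0 ≤ c := (abs_nonneg _).trans (ha j)
  calc a j * a j' * ∫ ω, u ω j * u ω j' ∂μ
      ≤ |a j| * |a j'| * |∫ ω, u ω j * u ω j' ∂μ| := by
        rw [← abs_mul, ← abs_mul]; exact le_abs_self _
    _ ≤ c ^ 2 * |∫ ω, u ω j * u ω j' ∂μ| := by
        rw [sq]; gcongr
        exacts [ha j, ha j']

end SecondMoments

theorem diversified_factor_mean_square_bound_general
    (d r rbar : ℕ)
    (W : Matrix (Fin d) (Fin rbar) ℝ) (cW : ℝ) (hW : ∀ j k, |W j k| ≤ cW)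
    (H : Matrix (Fin rbar) (Fin r) ℝ)
    (H' : Matrix (Fin r) (Fin rbar) ℝ) (hH' : H' * H = 1)
    (m₀ : (Fin r → ℝ) → ℝ → ℝ) (CL : ℝ)
    (hLip : ∀ (f f' : Fin r → ℝ) (x : ℝ),
      |m₀ f x - m₀ f' x| ≤ CL * Real.sqrt (∑ i, (f i - f' i) ^ 2))
    (Ω : Type*) [MeasurableSpace Ω] (P : Measure Ω)
    (F : Ω → Fin r → ℝ) (X : Ω → ℝ) (u : Ω → Fin d → ℝ)
    (hint : ∀ j j' : Fin d, Integrable (fun ω => u ω j * u ω j') P) :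
    (∫ ω, (m₀ (F ω) (X ω)
        - m₀ (H'.mulVec (H.mulVec (F ω) + (d : ℝ)⁻¹ • W.transpose.mulVec (u ω)))
            (X ω)) ^ 2 ∂P)
      ≤ CL ^ 2 * matOpNorm H' ^ 2 * ((d : ℝ) ^ 2)⁻¹ * (rbar : ℝ) * cW ^ 2
          * ((∑ j : Fin d, ∫ ω, (u ω j) ^ 2 ∂P)
            + ∑ j : Fin d, ∑ j' : Fin d,
                if j = j' then 0 else |∫ ω, u ω j * u ω j' ∂P|) := by
  set C := CL ^ 2 * matOpNorm H' ^ 2 * ((d : ℝ) ^ 2)⁻¹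
  have hpointwise : ∀ ω, (m₀ (F ω) (X ω)
      - m₀ (H' *ᵥ (H *ᵥ F ω + (d : ℝ)⁻¹ • Wᵀ *ᵥ u ω)) (X ω)) ^ 2
        ≤ C * ∑ k, ((fun j => W j k) ⬝ᵥ u ω) ^ 2 := fun ω => by
    have h := sq_sub_le_of_lipschitz_of_mul_eq_one hLip hH' (F ω)
      ((d : ℝ)⁻¹ • Wᵀ *ᵥ u ω) (X ω)
    rwa [sum_sq_smul, inv_pow, ← mul_assoc] at h
  have hdiag : ∀ j, |∫ ω, u ω j * u ω j ∂P| = ∫ ω, u ω j ^ 2 ∂P := fun j => by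
    simp only [← sq]
    exact abs_of_nonneg (integral_nonneg fun ω => sq_nonneg _)
  calc _ ≤ ∫ ω, C * ∑ k, ((fun j => W j k) ⬝ᵥ u ω) ^ 2 ∂P :=
        integral_mono_of_nonneg (ae_of_all _ fun ω => sq_nonneg _)
          ((integrable_finsetSum _ fun k _ => integrable_sq_dotProduct hint _).const_mul C)
          (ae_of_all _ hpointwise)
    _ = C * ∑ k, ∫ ω, ((fun j => W j k) ⬝ᵥ u ω) ^ 2 ∂P := by
        rw [integral_const_mul, integral_finsetSum _ fun k _ => integrable_sq_dotProduct hint _]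
    _ ≤ C * ∑ _k : Fin rbar, cW ^ 2 * ∑ j, ∑ j', |∫ ω, u ω j * u ω j' ∂P| := by
        gcongr with k
        exact integral_sq_dotProduct_le hint fun j => hW j k
    _ = _ := by
        rw [sum_sum_abs_eq_sum_abs_diag_add_offDiag, Finset.sum_const, Finset.card_univ,
          Fintype.card_fin, nsmul_eq_mul]
        simp only [hdiag]
        ring

/-- Mean-square bound for approximating `m₀(F, X)` by `g₀(F̃, X) = m₀(H'F̃, X)` where
`F̃ = HF + d⁻¹Wᵀu`:
`𝔼[(m₀(F,X) − m₀(H'F̃,X))²] ≤ C_L² ‖H'‖_op² d⁻² rbar c_W² (∑_j 𝔼u_j² + ∑_{j≠j'}|𝔼u_ju_{j'}|)`. -/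
theorem diversified_factor_mean_square_bound
    (d r rbar : ℕ) (hd : 1 ≤ d) (hr : 1 ≤ r) (hrbar : 1 ≤ rbar)
    (B : Matrix (Fin d) (Fin r) ℝ)
    (W : Matrix (Fin d) (Fin rbar) ℝ) (cW : ℝ) (hW : ∀ j k, |W j k| ≤ cW)
    (H : Matrix (Fin rbar) (Fin r) ℝ) (hH : H = (d : ℝ)⁻¹ • (W.transpose * B))
    (H' : Matrix (Fin r) (Fin rbar) ℝ) (hH' : H' * H = 1)
    (m₀ : (Fin r → ℝ) → ℝ → ℝ) (hm₀ : Measurable (Function.uncurry m₀)) (CL : ℝ)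
    (hLip : ∀ (f f' : Fin r → ℝ) (x : ℝ),
      |m₀ f x - m₀ f' x| ≤ CL * Real.sqrt (∑ i, (f i - f' i) ^ 2))
    (Ω : Type*) [MeasurableSpace Ω] (P : Measure Ω) [IsProbabilityMeasure P]
    (F : Ω → Fin r → ℝ) (X : Ω → ℝ) (u : Ω → Fin d → ℝ)
    (hF : Measurable F) (hX : Measurable X) (hu : Measurable u)
    (hint : ∀ j j' : Fin d, Integrable (fun ω => u ω j * u ω j') P) :
    (∫ ω, (m₀ (F ω) (X ω)
        - m₀ (H'.mulVec (H.mulVec (F ω) + (d : ℝ)⁻¹ • W.transpose.mulVec (u ω)))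
            (X ω)) ^ 2 ∂P)
      ≤ CL ^ 2 * matOpNorm H' ^ 2 * ((d : ℝ) ^ 2)⁻¹ * (rbar : ℝ) * cW ^ 2
          * ((∑ j : Fin d, ∫ ω, (u ω j) ^ 2 ∂P)
            + ∑ j : Fin d, ∑ j' : Fin d,
                if j = j' then 0 else |∫ ω, u ω j * u ω j' ∂P|) :=
  diversified_factor_mean_square_bound_general d r rbar W cW hW H H' hH' m₀ CL hLip Ω P F X u hint
end

section
/- Fix γ > 0 and define Ψ : ℝ → ℝ by Ψ(t) = t for |t| ≤ γ, and Ψ(t) = sgn(t)·γ − 1/2 + 1/(1 + exp(−4(t − sgn(t)·γ))) for |t| > γ. Then Ψ is twice differentiable on all of ℝ; Ψ, its first derivative Ψ', and its second derivative Ψ'' are all bounded on ℝ (with |Ψ(t)| ≤ γ + 1/2, |Ψ'(t)| ≤ 1, and |Ψ''(t)| ≤ 4 for every t); and Ψ(t) = t for all |t| ≤ γ. -/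
/-!
Outside `[-γ, γ]`, `Ψ` is the logistic tail `c - 1/2 + σ(4(t - c))` with `c = ±γ`, where `σ` is
the sigmoid. Since `σ(0) = 1/2`, `σ'(0) = 1/4` and `σ''(0) = 0`, each tail meets the identity at
`t = c` with the same value, slope and curvature, so the three pieces glue to a twice
differentiable function. The bounds come from `0 < σ < 1`, `σ' = σ(1 - σ) ≤ 1/4` and
`σ'' = σ(1 - σ)(1 - 2σ)` with `|1 - 2σ| ≤ 1`.
-/

open Real Set Filter Topology

theorem HasDerivAt.of_nhdsLE_nhdsGE {f g h : ℝ → ℝ} {a f' : ℝ} (hg : HasDerivAt g f' a)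
    (hh : HasDerivAt h f' a) (hfg : f =ᶠ[𝓝[≤] a] g) (hfh : f =ᶠ[𝓝[≥] a] h) :
    HasDerivAt f f' a := by
  have hle := hg.hasDerivWithinAt.congr_of_eventuallyEq_of_mem hfg self_mem_Iic
  have hge := hh.hasDerivWithinAt.congr_of_eventuallyEq_of_mem hfh self_mem_Ici
  simpa only [Iic_union_Ici, hasDerivWithinAt_univ] using hle.union hge

noncomputable def piecewiseIcc (a b : ℝ) (g m h : ℝ → ℝ) (x : ℝ) : ℝ :=
  if x < a then g x else if x ≤ b then m x else h x

section piecewiseIcc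

variable {a b : ℝ} {g m h : ℝ → ℝ}

theorem piecewiseIcc_of_lt_left {x : ℝ} (hx : x < a) : piecewiseIcc a b g m h x = g x :=
  if_pos hx

theorem piecewiseIcc_of_mem_Icc {x : ℝ} (hx : x ∈ Icc a b) :
    piecewiseIcc a b g m h x = m x := by
  simp [piecewiseIcc, hx.2, not_lt.2 hx.1]

theorem piecewiseIcc_of_right_lt {x : ℝ} (hab : a ≤ b) (hx : b < x) :
    piecewiseIcc a b g m h x = h x := by
  simp [piecewiseIcc, not_lt.2 (hab.trans hx.le), not_le.2 hx]

theorem abs_piecewiseIcc_le {C : ℝ} (hab : a ≤ b) (hg : ∀ x < a, |g x| ≤ C)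
    (hm : ∀ x ∈ Icc a b, |m x| ≤ C) (hh : ∀ x > b, |h x| ≤ C) (x : ℝ) :
    |piecewiseIcc a b g m h x| ≤ C := by
  rcases lt_or_ge x a with hxa | hax
  · rw [piecewiseIcc_of_lt_left hxa]; exact hg x hxa
  rcases le_or_gt x b with hxb | hbx
  · rw [piecewiseIcc_of_mem_Icc ⟨hax, hxb⟩]; exact hm x ⟨hax, hxb⟩
  · rw [piecewiseIcc_of_right_lt hab hbx]; exact hh x hbx

theorem hasDerivAt_piecewiseIcc {g' m' h' : ℝ → ℝ} (hab : a < b)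
    (hg : ∀ x, HasDerivAt g (g' x) x) (hm : ∀ x, HasDerivAt m (m' x) x)
    (hh : ∀ x, HasDerivAt h (h' x) x) (ha : g a = m a) (hb : m b = h b)
    (ha' : g' a = m' a) (hb' : m' b = h' b) (x : ℝ) :
    HasDerivAt (piecewiseIcc a b g m h) (piecewiseIcc a b g' m' h' x) x := by
  have hIic : piecewiseIcc a b g m h =ᶠ[𝓝[≤] a] g := by
    refine eventually_nhdsWithin_of_forall fun y (hy : y ≤ a) => ?_
    rcases hy.lt_or_eq with hy | rfl
    · exact piecewiseIcc_of_lt_left hy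
    · rw [piecewiseIcc_of_mem_Icc ⟨le_rfl, hab.le⟩, ha]
  have hIci : piecewiseIcc a b g m h =ᶠ[𝓝[≥] b] h := by
    refine eventually_nhdsWithin_of_forall fun y (hy : b ≤ y) => ?_
    rcases hy.lt_or_eq with hy | rfl
    · exact piecewiseIcc_of_right_lt hab.le hy
    · rw [piecewiseIcc_of_mem_Icc ⟨hab.le, le_rfl⟩, hb]
  have hIcc {l : Filter ℝ} (hl : Icc a b ∈ l) : piecewiseIcc a b g m h =ᶠ[l] m :=
    eventually_of_mem hl fun y hy => piecewiseIcc_of_mem_Icc hy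
  rcases lt_trichotomy x a with hxa | rfl | hax
  · rw [piecewiseIcc_of_lt_left hxa]
    exact (hg x).congr_of_eventuallyEq <|
      eventually_of_mem (Iio_mem_nhds hxa) fun y hy => piecewiseIcc_of_lt_left hy
  · rw [piecewiseIcc_of_mem_Icc ⟨le_rfl, hab.le⟩, ← ha']
    exact (hg x).of_nhdsLE_nhdsGE ((hm x).congr_deriv ha'.symm) hIic
      (hIcc (Icc_mem_nhdsGE hab))
  rcases lt_trichotomy x b with hxb | rfl | hbx
  · rw [piecewiseIcc_of_mem_Icc ⟨hax.le, hxb.le⟩]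
    exact (hm x).congr_of_eventuallyEq (hIcc (Icc_mem_nhds hax hxb))
  · rw [piecewiseIcc_of_mem_Icc ⟨hab.le, le_rfl⟩]
    exact (hm x).of_nhdsLE_nhdsGE ((hh x).congr_deriv hb'.symm)
      (hIcc (Icc_mem_nhdsLE hab)) hIci
  · rw [piecewiseIcc_of_right_lt hab.le hbx]
    exact (hh x).congr_of_eventuallyEq <|
      eventually_of_mem (Ioi_mem_nhds hbx) fun y hy => piecewiseIcc_of_right_lt hab.le hy

end piecewiseIcc

theorem hasDerivAt_sigmoid_mul_one_sub_sigmoid (x : ℝ) :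
    HasDerivAt (fun y => sigmoid y * (1 - sigmoid y))
      (sigmoid x * (1 - sigmoid x) * (1 - 2 * sigmoid x)) x :=
  ((hasDerivAt_sigmoid x).mul ((hasDerivAt_sigmoid x).const_sub 1)).congr_deriv (by ring)

theorem sigmoid_mul_one_sub_sigmoid_nonneg (x : ℝ) : 0 ≤ sigmoid x * (1 - sigmoid x) :=
  mul_nonneg (sigmoid_nonneg x) (sub_nonneg.2 (sigmoid_le_one x))

theorem sigmoid_mul_one_sub_sigmoid_le (x : ℝ) : sigmoid x * (1 - sigmoid x) ≤ 1 / 4 := by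
  nlinarith [sq_nonneg (2 * sigmoid x - 1)]

theorem abs_one_sub_two_mul_sigmoid_le (x : ℝ) : |1 - 2 * sigmoid x| ≤ 1 :=
  abs_le.2 ⟨by linarith [sigmoid_le_one x], by linarith [sigmoid_nonneg x]⟩

noncomputable def logisticTail (c t : ℝ) : ℝ := c - 1 / 2 + sigmoid (4 * (t - c))

noncomputable def logisticTailDeriv (c t : ℝ) : ℝ :=
  4 * (sigmoid (4 * (t - c)) * (1 - sigmoid (4 * (t - c))))

noncomputable def logisticTailDeriv2 (c t : ℝ) : ℝ :=
  16 * (sigmoid (4 * (t - c)) * (1 - sigmoid (4 * (t - c))) * (1 - 2 * sigmoid (4 * (t - c))))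

theorem hasDerivAt_four_mul_sub (c t : ℝ) : HasDerivAt (fun s : ℝ => 4 * (s - c)) 4 t := by
  simpa using ((hasDerivAt_id t).sub_const c).const_mul 4

section logisticTail

variable (c t : ℝ)

theorem hasDerivAt_logisticTail :
    HasDerivAt (logisticTail c) (logisticTailDeriv c t) t :=
  (((hasDerivAt_sigmoid _).comp t (hasDerivAt_four_mul_sub c t)).const_add
    (c - 1 / 2)).congr_deriv (by rw [logisticTailDeriv]; ring)

theorem hasDerivAt_logisticTailDeriv :
    HasDerivAt (logisticTailDeriv c) (logisticTailDeriv2 c t) t :=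
  (((hasDerivAt_sigmoid_mul_one_sub_sigmoid _).comp t
    (hasDerivAt_four_mul_sub c t)).const_mul 4).congr_deriv (by rw [logisticTailDeriv2]; ring)

theorem logisticTail_self : logisticTail c c = c := by
  norm_num [logisticTail, sigmoid_zero]

theorem logisticTailDeriv_self : logisticTailDeriv c c = 1 := by
  norm_num [logisticTailDeriv, sigmoid_zero]

theorem logisticTailDeriv2_self : logisticTailDeriv2 c c = 0 := by
  norm_num [logisticTailDeriv2, sigmoid_zero]

theorem abs_logisticTail_le : |logisticTail c t| ≤ |c| + 1 / 2 := by
  have : |logisticTail c t - c| ≤ 1 / 2 := by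
    rw [logisticTail, abs_le]
    constructor <;> linarith [sigmoid_nonneg (4 * (t - c)), sigmoid_le_one (4 * (t - c))]
  linarith [abs_sub_abs_le_abs_sub (logisticTail c t) c]

theorem abs_logisticTailDeriv_le : |logisticTailDeriv c t| ≤ 1 := by
  rw [logisticTailDeriv, abs_le]
  constructor <;> linarith [sigmoid_mul_one_sub_sigmoid_nonneg (4 * (t - c)),
    sigmoid_mul_one_sub_sigmoid_le (4 * (t - c))]

theorem abs_logisticTailDeriv2_le : |logisticTailDeriv2 c t| ≤ 4 := by
  let s := 4 * (t - c)
  calc |logisticTailDeriv2 c t|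
      = 16 * (sigmoid s * (1 - sigmoid s)) * |1 - 2 * sigmoid s| := by
        rw [logisticTailDeriv2, abs_mul, abs_mul,
          abs_of_nonneg (sigmoid_mul_one_sub_sigmoid_nonneg s)]
        norm_num [s, mul_assoc]
    _ ≤ 16 * (1 / 4) * 1 := by
        gcongr
        · exact sigmoid_mul_one_sub_sigmoid_le s
        · exact abs_one_sub_two_mul_sigmoid_le s
    _ = 4 := by norm_num

end logisticTail

theorem logisticTail_eq (c t : ℝ) :
    logisticTail c t = c - 1 / 2 + 1 / (1 + exp (-(4 * (t - c)))) := by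
  rw [logisticTail, sigmoid_def, inv_eq_one_div]

theorem ite_abs_le_eq_piecewiseIcc {γ : ℝ} (hγ : 0 ≤ γ) (t : ℝ) :
    (if |t| ≤ γ then t else Real.sign t * γ - 1 / 2
      + 1 / (1 + Real.exp (-(4 * (t - Real.sign t * γ))))) =
    piecewiseIcc (-γ) γ (logisticTail (-γ)) id (logisticTail γ) t := by
  rcases lt_or_ge t (-γ) with ht | ht
  · have ht0 : t < 0 := by linarith
    rw [if_neg (by rw [abs_of_neg ht0]; linarith), piecewiseIcc_of_lt_left ht, logisticTail_eq,
      Real.sign_of_neg ht0, neg_one_mul]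
  rcases le_or_gt t γ with ht' | ht'
  · rw [if_pos (abs_le.2 ⟨ht, ht'⟩), piecewiseIcc_of_mem_Icc ⟨ht, ht'⟩, id]
  · have ht0 : 0 < t := by linarith
    rw [if_neg (by rw [abs_of_pos ht0]; linarith), piecewiseIcc_of_right_lt (by linarith) ht',
      logisticTail_eq, Real.sign_of_pos ht0, one_mul]

/-- The explicit truncation function: for `γ > 0`, `Ψ(t) = t` for `|t| ≤ γ` and
`Ψ(t) = sgn(t)γ − 1/2 + 1/(1 + exp(−4(t − sgn(t)γ)))` for `|t| > γ`.  Then `Ψ` is twice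
differentiable on all of `ℝ`; `Ψ`, `Ψ'` and `Ψ''` are bounded (with `|Ψ| ≤ γ + 1/2`,
`|Ψ'| ≤ 1`, `|Ψ''| ≤ 4`); and `Ψ(t) = t` for `|t| ≤ γ`. -/
theorem truncation_function_properties (γ : ℝ) (hγ : 0 < γ) (Ψ : ℝ → ℝ)
    (hΨ : ∀ t : ℝ, Ψ t = if |t| ≤ γ then t
      else Real.sign t * γ - 1 / 2
        + 1 / (1 + Real.exp (-(4 * (t - Real.sign t * γ))))) :
    (∀ t : ℝ, DifferentiableAt ℝ Ψ t) ∧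
    (∀ t : ℝ, DifferentiableAt ℝ (deriv Ψ) t) ∧
    (∀ t : ℝ, |Ψ t| ≤ γ + 1 / 2) ∧
    (∀ t : ℝ, |deriv Ψ t| ≤ 1) ∧
    (∀ t : ℝ, |deriv (deriv Ψ) t| ≤ 4) ∧
    (∀ t : ℝ, |t| ≤ γ → Ψ t = t) := by
  have hlt : -γ < γ := by linarith
  have hΨ_eq : Ψ = piecewiseIcc (-γ) γ (logisticTail (-γ)) id (logisticTail γ) :=
    funext fun t => (hΨ t).trans (ite_abs_le_eq_piecewiseIcc hγ.le t)
  have hΨ' : ∀ t, HasDerivAt Ψ (piecewiseIcc (-γ) γ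
      (logisticTailDeriv (-γ)) (fun _ => 1) (logisticTailDeriv γ) t) t := by
    rw [hΨ_eq]
    exact hasDerivAt_piecewiseIcc hlt (hasDerivAt_logisticTail _) hasDerivAt_id
      (hasDerivAt_logisticTail _) (logisticTail_self _) (logisticTail_self _).symm
      (logisticTailDeriv_self _) (logisticTailDeriv_self _).symm
  have hΨ'' : ∀ t, HasDerivAt (deriv Ψ) (piecewiseIcc (-γ) γ
      (logisticTailDeriv2 (-γ)) (fun _ => 0) (logisticTailDeriv2 γ) t) t := by
    rw [funext fun t => (hΨ' t).deriv]
    exact hasDerivAt_piecewiseIcc hlt (hasDerivAt_logisticTailDeriv _)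
      (fun _ => hasDerivAt_const _ _) (hasDerivAt_logisticTailDeriv _) (logisticTailDeriv_self _)
      (logisticTailDeriv_self _).symm (logisticTailDeriv2_self _) (logisticTailDeriv2_self _).symm
  refine ⟨fun t => (hΨ' t).differentiableAt, fun t => (hΨ'' t).differentiableAt, ?_, ?_, ?_,
    fun t ht => by rw [hΨ, if_pos ht]⟩
  · rw [hΨ_eq]
    have hγ_abs : |γ| = γ := abs_of_pos hγ
    refine abs_piecewiseIcc_le hlt.le (fun t _ => ?_) (fun t ht => ?_) (fun t _ => ?_)
    · simpa [hγ_abs] using abs_logisticTail_le (-γ) t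
    · exact (abs_le.2 ht).trans (by linarith)
    · simpa [hγ_abs] using abs_logisticTail_le γ t
  · intro t
    rw [(hΨ' t).deriv]
    exact abs_piecewiseIcc_le hlt.le (fun t _ => abs_logisticTailDeriv_le _ t) (by norm_num)
      (fun t _ => abs_logisticTailDeriv_le _ t) t
  · intro t
    rw [(hΨ'' t).deriv]
    exact abs_piecewiseIcc_le hlt.le (fun t _ => abs_logisticTailDeriv2_le _ t) (by norm_num)
      (fun t _ => abs_logisticTailDeriv2_le _ t) t
end

section
/- Let K : ℝ → ℝ be continuously differentiable, supported on [−1, 1], with K(−1) = K(1) = 0, derivative K̇, and ∫_{−1}^{1} K(a) da = 1. Let p : ℝ → ℝ be differentiable everywhere with bounded derivative p', and suppose p' is continuous at the point x. Then (1/h) ∫_{−1}^{1} K̇(a) · p(x − a h) da → p'(x) as h → 0⁺. In particular, for such p, the kernel-smoothed derivative of p at x converges to the true derivative p'(x) as the bandwidth tends to zero. -/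
/-! Integrating by parts, with the boundary terms killed by `K (-1) = K 1 = 0`, turns
`(1/h) ∫ K̇(a) p(x - a h) da` into `∫ p'(x - a h) K(a) da`. As `h → 0` the integrand tends to
`p'(x) K(a)` and is dominated by `M |K(a)|`, so dominated convergence gives the limit
`p'(x) ∫ K = p'(x)`. -/

open MeasureTheory Filter Topology

theorem intervalIntegrable_comp_sub_mul_of_abs_le {g : ℝ → ℝ} {M : ℝ} (hg : Measurable g)
    (hM : ∀ z, |g z| ≤ M) (x h a b : ℝ) :
    IntervalIntegrable (fun t => g (x - t * h)) volume a b :=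
  intervalIntegrable_const.mono_fun' (hg.comp (by fun_prop)).aestronglyMeasurable
    (ae_of_all _ fun _ => hM _)

theorem integral_deriv_mul_comp_sub_mul {K p : ℝ → ℝ} {a b x h : ℝ} (hK : Differentiable ℝ K)
    (hK' : IntervalIntegrable (deriv K) volume a b) (hKa : K a = 0) (hKb : K b = 0)
    (hp : Differentiable ℝ p)
    (hp' : IntervalIntegrable (fun t => deriv p (x - t * h)) volume a b) :
    ∫ t in a..b, deriv K t * p (x - t * h) = h * ∫ t in a..b, deriv p (x - t * h) * K t := by
  have hu : ∀ t ∈ Set.uIcc a b,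
      HasDerivAt (fun t => p (x - t * h)) (deriv p (x - t * h) * -h) t := fun t _ =>
    ((hp _).hasDerivAt.comp t (((hasDerivAt_id' t).mul_const h).const_sub x)).congr_deriv
      (by ring)
  simp_rw [mul_comm (deriv K _)]
  rw [intervalIntegral.integral_mul_deriv_eq_deriv_mul hu (fun t _ => (hK t).hasDerivAt)
    (hp'.mul_const (-h)) hK', hKa, hKb]
  simp_rw [mul_right_comm _ (-h)]
  rw [intervalIntegral.integral_mul_const]
  ring

theorem tendsto_integral_comp_sub_mul_mul {g K : ℝ → ℝ} {M x a b : ℝ} (hg : Measurable g)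
    (hM : ∀ z, |g z| ≤ M) (hgx : ContinuousAt g x) (hK : IntervalIntegrable K volume a b) :
    Tendsto (fun h => ∫ t in a..b, g (x - t * h) * K t) (𝓝 0)
      (𝓝 (g x * ∫ t in a..b, K t)) := by
  rw [← intervalIntegral.integral_const_mul]
  refine intervalIntegral.tendsto_integral_filter_of_dominated_convergence (fun t => M * |K t|)
    (Eventually.of_forall fun h => ?_) (Eventually.of_forall fun h => ?_) (hK.abs.const_mul M)
    (ae_of_all _ fun t _ => ?_)
  · exact (hg.comp (by fun_prop)).aestronglyMeasurable.mul
      (intervalIntegrable_iff.1 hK).aestronglyMeasurable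
  · refine ae_of_all _ fun t _ => ?_
    rw [norm_mul, Real.norm_eq_abs, Real.norm_eq_abs]
    exact mul_le_mul_of_nonneg_right (hM _) (abs_nonneg _)
  · have hshift : Tendsto (fun h : ℝ => x - t * h) (𝓝 0) (𝓝 x) :=
      (by fun_prop : Continuous fun h : ℝ => x - t * h).tendsto' 0 x (by simp)
    exact (hgx.tendsto.comp hshift).mul_const (K t)

theorem smoothed_derivative_tendsto_deriv_general (K : ℝ → ℝ) (hK : ContDiff ℝ 1 K)
    (hKm1 : K (-1) = 0) (hKp1 : K 1 = 0)
    (hKint : (∫ a in (-1 : ℝ)..1, K a) = 1)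
    (p : ℝ → ℝ) (hp : Differentiable ℝ p) (M : ℝ) (hM : ∀ z, |deriv p z| ≤ M)
    (x : ℝ) (hcont : ContinuousAt (deriv p) x) :
    Tendsto (fun h : ℝ => (1 / h) * ∫ a in (-1 : ℝ)..1, deriv K a * p (x - a * h))
      (nhdsWithin 0 (Set.Ioi 0)) (nhds (deriv p x)) := by
  have hlim := tendsto_integral_comp_sub_mul_mul (measurable_deriv p) hM hcont
    (hK.continuous.intervalIntegrable (-1) 1)
  rw [hKint, mul_one] at hlim
  refine (hlim.mono_left nhdsWithin_le_nhds).congr' ?_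
  filter_upwards [self_mem_nhdsWithin] with h (hh : 0 < h)
  rw [integral_deriv_mul_comp_sub_mul (hK.differentiable one_ne_zero)
    ((hK.continuous_deriv le_rfl).intervalIntegrable _ _) hKm1 hKp1 hp
    (intervalIntegrable_comp_sub_mul_of_abs_le (measurable_deriv p) hM x h _ _),
    one_div, inv_mul_cancel_left₀ hh.ne']

/-- The kernel-smoothed derivative converges to the true derivative as the bandwidth tends
to zero: if `K` is a `C¹` kernel supported on `[−1,1]` with `K(−1) = K(1) = 0` and
`∫_{−1}^1 K = 1`, and `p` is everywhere differentiable with bounded derivative `p'`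
continuous at `x`, then `(1/h) ∫_{−1}^1 K̇(a) p(x − a h) da → p'(x)` as `h → 0⁺`. -/
theorem smoothed_derivative_tendsto_deriv (K : ℝ → ℝ) (hK : ContDiff ℝ 1 K)
    (hsupp : Function.support K ⊆ Set.Icc (-1) 1)
    (hKm1 : K (-1) = 0) (hKp1 : K 1 = 0)
    (hKint : (∫ a in (-1 : ℝ)..1, K a) = 1)
    (p : ℝ → ℝ) (hp : Differentiable ℝ p) (M : ℝ) (hM : ∀ z, |deriv p z| ≤ M)
    (x : ℝ) (hcont : ContinuousAt (deriv p) x) :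
    Tendsto (fun h : ℝ => (1 / h) * ∫ a in (-1 : ℝ)..1, deriv K a * p (x - a * h))
      (nhdsWithin 0 (Set.Ioi 0)) (nhds (deriv p x)) :=
  smoothed_derivative_tendsto_deriv_general K hK hKm1 hKp1 hKint p hp M hM x hcont
end
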